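/- arXiv:1209.5750 — 3 statements merged into one kernel-verified Lean document; each statement's English description precedes it below -/
import Mathlib

section
/- Suppose ψ is a unit vector in a bipartite space H_A ⊗ H_B (with dim H_B = D) such that P (U_B ψ) = 0 for every unitary U_B acting on the B factor, where P is a fixed operator on H_A ⊗ H_B. Then P · (Tr_B[|ψ⟩⟨ψ|] ⊗ I_B / D) = 0. -/
/-!
Unitaries span the full matrix algebra, so by linearity `P ((1 ⊗ M) ψ) = 0` for every matrix `M`,
in particular for the matrix units `E_bc`. The conclusion follows from the Kraus decomposition
`Tr_B[X] ⊗ I = ∑_{b,c} (1 ⊗ E_bc) X (1 ⊗ E_cb)` of the completely depolarizing channel.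
-/

open Kronecker

/-- Partial trace over the second tensor factor. -/
noncomputable def ptraceB {A B : Type*} [Fintype B] (M : Matrix (A × B) (A × B) ℂ) : Matrix A A ℂ :=
  fun a a' => ∑ b, M (a, b) (a', b)

open Matrix

open scoped Matrix.Norms.L2Operator in
theorem Matrix.span_unitaryGroup_eq_top {n : Type*} [Fintype n] [DecidableEq n] :
    Submodule.span ℂ (unitaryGroup n ℂ : Set (Matrix n n ℂ)) = ⊤ :=
  CStarAlgebra.span_unitary _

theorem ptraceB_kronecker_one {A B : Type*} [Fintype A] [Fintype B] [DecidableEq A]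
    [DecidableEq B] (X : Matrix (A × B) (A × B) ℂ) :
    ptraceB X ⊗ₖ (1 : Matrix B B ℂ) =
      ∑ b, ∑ c,
        ((1 : Matrix A A ℂ) ⊗ₖ single b c 1) * X * ((1 : Matrix A A ℂ) ⊗ₖ single c b 1) := by
  ext ⟨a, x⟩ ⟨a', y⟩
  simp [ptraceB, mul_apply, Matrix.sum_apply, Fintype.sum_prod_type, single_apply, one_apply,
    ite_and, Finset.sum_ite_eq, Finset.sum_ite_eq', Finset.sum_ite_irrel, eq_comm (a := y)]

theorem mulVec_one_kronecker_mulVec_eq_zero {A B : Type*} [Fintype A] [Fintype B] [DecidableEq A]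
    [DecidableEq B] {ψ : A × B → ℂ} {P : Matrix (A × B) (A × B) ℂ}
    (h : ∀ U : unitaryGroup B ℂ, P *ᵥ (((1 : Matrix A A ℂ) ⊗ₖ (U : Matrix B B ℂ)) *ᵥ ψ) = 0)
    (M : Matrix B B ℂ) :
    P *ᵥ (((1 : Matrix A A ℂ) ⊗ₖ M) *ᵥ ψ) = 0 := by
  let f : Matrix B B ℂ →ₗ[ℂ] A × B → ℂ :=
    P.mulVecLin ∘ₗ (mulVecBilin ℂ ℂ).flip ψ ∘ₗ kroneckerBilinear (R := ℂ) (1 : Matrix A A ℂ)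
  have hf : f = 0 := LinearMap.ext_on span_unitaryGroup_eq_top fun U hU => h ⟨U, hU⟩
  exact LinearMap.congr_fun hf M

theorem mul_mul_vecMulVec_mul_eq_zero {R l m n : Type*} [Semiring R] [Fintype l]
    [Fintype m] [Fintype n] {P : Matrix l l R} {K : Matrix l m R} {u : m → R}
    (h : P *ᵥ (K *ᵥ u) = 0) (v : n → R) (L : Matrix n l R) :
    P * (K * vecMulVec u v * L) = 0 := by
  rw [mul_vecMulVec, vecMulVec_mul, mul_vecMulVec, h, zero_vecMulVec]

theorem stmt_6_general {A B : Type*} [Fintype A] [Fintype B] [DecidableEq A] [DecidableEq B]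
    (D : ℕ)
    (ψ : A × B → ℂ)
    (P : Matrix (A × B) (A × B) ℂ)
    (h : ∀ U : Matrix.unitaryGroup B ℂ,
      P.mulVec (((1 : Matrix A A ℂ) ⊗ₖ (U : Matrix B B ℂ)).mulVec ψ) = 0) :
    P * (ptraceB (Matrix.vecMulVec ψ (star ψ)) ⊗ₖ ((D : ℂ)⁻¹ • (1 : Matrix B B ℂ))) = 0 := by
  rw [kronecker_smul, Matrix.mul_smul, ptraceB_kronecker_one]
  simp only [Finset.mul_sum]
  refine smul_eq_zero_of_right _ (Finset.sum_eq_zero fun b _ => Finset.sum_eq_zero fun c _ => ?_)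
  exact mul_mul_vecMulVec_mul_eq_zero (mulVec_one_kronecker_mulVec_eq_zero h _) _ _

/-- If P annihilates (I ⊗ U)ψ for every unitary U on the B factor, then
P · (Tr_B[|ψ⟩⟨ψ|] ⊗ I/D) = 0. -/
theorem stmt_6 {A B : Type*} [Fintype A] [Fintype B] [DecidableEq A] [DecidableEq B]
    (D : ℕ) (hD : Fintype.card B = D) (hD0 : 0 < D)
    (ψ : A × B → ℂ) (hψ : ∑ p, Complex.normSq (ψ p) = 1)
    (P : Matrix (A × B) (A × B) ℂ)
    (h : ∀ U : Matrix.unitaryGroup B ℂ,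
      P.mulVec (((1 : Matrix A A ℂ) ⊗ₖ (U : Matrix B B ℂ)).mulVec ψ) = 0) :
    P * (ptraceB (Matrix.vecMulVec ψ (star ψ)) ⊗ₖ ((D : ℂ)⁻¹ • (1 : Matrix B B ℂ))) = 0 :=
  stmt_6_general D ψ P h
end

section
/- Let P be a positive semidefinite operator on a bipartite space H_A ⊗ H_B and σ a positive semidefinite operator on H_A. If P · (σ ⊗ I_B) = 0, then Tr_B[P] · σ = 0. -/
open Kronecker
open scoped ComplexOrder

theorem ptraceB_zero {A B : Type*} [Fintype B] :
    ptraceB (0 : Matrix (A × B) (A × B) ℂ) = 0 := by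
  ext a a'
  simp [ptraceB]

theorem ptraceB_mul_kronecker_one {A B : Type*} [Fintype A] [Fintype B] [DecidableEq B]
    (M : Matrix (A × B) (A × B) ℂ) (N : Matrix A A ℂ) :
    ptraceB (M * (N ⊗ₖ (1 : Matrix B B ℂ))) = ptraceB M * N := by
  ext a a'
  simp only [ptraceB, Matrix.mul_apply, Matrix.kroneckerMap_apply, Matrix.one_apply,
    Fintype.sum_prod_type, mul_ite, mul_one, mul_zero, Finset.sum_ite_eq', Finset.mem_univ,
    if_true, Finset.sum_mul]
  exact Finset.sum_comm

theorem stmt_7_general {A B : Type*} [Fintype A] [Fintype B] [DecidableEq B]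
    (P : Matrix (A × B) (A × B) ℂ)
    (σ : Matrix A A ℂ)
    (h : P * (σ ⊗ₖ (1 : Matrix B B ℂ)) = 0) :
    ptraceB P * σ = 0 := by
  rw [← ptraceB_mul_kronecker_one, h, ptraceB_zero]

/-- If P ≥ 0 on H_A ⊗ H_B, σ ≥ 0 on H_A and P (σ ⊗ I) = 0, then Tr_B[P] σ = 0. -/
theorem stmt_7 {A B : Type*} [Fintype A] [Fintype B] [DecidableEq A] [DecidableEq B]
    (P : Matrix (A × B) (A × B) ℂ) (hP : P.PosSemidef)
    (σ : Matrix A A ℂ) (hσ : σ.PosSemidef)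
    (h : P * (σ ⊗ₖ (1 : Matrix B B ℂ)) = 0) :
    ptraceB P * σ = 0 :=
  stmt_7_general P σ h
end

section
/- Let E be a positive linear map on operators of a finite-dimensional Hilbert space such that Tr[E(ρ)] < Tr[ρ] for every nonzero positive semidefinite ρ. Then the spectral radius of E is strictly less than 1. -/
/-!
Strict trace decrease on the PSD cone becomes a uniform bound `m ‖ρ‖ ≤ tr ρ - tr E(ρ)` by
compactness of the base `{ρ ≥ 0, ‖ρ‖ = 1}` of the cone. Telescoping along an orbit gives
`∑ₖ ‖Eᵏ ρ‖ ≤ tr ρ / m`, so `Eᵏ ρ → 0` for PSD `ρ`, hence for every matrix, since PSD matrices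
span `Mₙ(ℂ)`. For an eigenvector `X` with eigenvalue `c`, `cᵏ X = Eᵏ X → 0` forces `‖c‖ < 1`.
-/

open scoped ComplexOrder
open Filter Topology

section Cone

variable {V : Type*} [NormedAddCommGroup V] [NormedSpace ℝ V] [FiniteDimensional ℝ V]
  {C : PointedCone ℝ V}

theorem PointedCone.exists_pos_mul_norm_le (hC : IsClosed (C : Set V)) (ψ : V →ₗ[ℝ] ℝ)
    (hψ : ∀ x ∈ C, x ≠ 0 → 0 < ψ x) : ∃ m > 0, ∀ x ∈ C, m * ‖x‖ ≤ ψ x := by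
  obtain ⟨m, hm, hmin⟩ := ((isCompact_sphere (0 : V) 1).inter_left hC).exists_forall_le'
    ψ.continuous_of_finiteDimensional.continuousOn
    fun x hx => hψ x hx.1 (ne_zero_of_mem_unit_sphere ⟨x, hx.2⟩)
  refine ⟨m, hm, fun x hx => ?_⟩
  rcases eq_or_ne x 0 with rfl | hx0
  · simp
  have hxpos : 0 < ‖x‖ := norm_pos_iff.2 hx0
  have hbase := hmin (‖x‖⁻¹ • x) ⟨C.smul_mem (inv_nonneg.2 hxpos.le) hx, by simp [norm_smul, hx0]⟩
  rwa [map_smul, smul_eq_mul, inv_mul_eq_div, le_div_iff₀ hxpos] at hbase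

theorem PointedCone.tendsto_pow_apply_zero (hC : IsClosed (C : Set V)) {T : Module.End ℝ V}
    (hTC : ∀ x ∈ C, T x ∈ C) {φ : V →ₗ[ℝ] ℝ} (hφ : ∀ x ∈ C, 0 ≤ φ x)
    (hTφ : ∀ x ∈ C, x ≠ 0 → φ (T x) < φ x) {x : V} (hx : x ∈ C) :
    Tendsto (fun k => (T ^ k) x) atTop (𝓝 0) := by
  obtain ⟨m, hm, hcoer⟩ := C.exists_pos_mul_norm_le hC (φ - φ ∘ₗ T)
    fun y hy hy0 => sub_pos.2 (hTφ y hy hy0)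
  set u : ℕ → V := fun k => (T ^ k) x
  have hu_succ (k : ℕ) : u (k + 1) = T (u k) := by simp [u, pow_succ']
  have hu_mem (k : ℕ) : u k ∈ C := by
    induction k with
    | zero => simpa [u] using hx
    | succ k ih => exact hu_succ k ▸ hTC _ ih
  have hpartial (N : ℕ) : ∑ k ∈ Finset.range N, ‖u k‖ ≤ φ x / m := by
    rw [le_div_iff₀' hm, Finset.mul_sum]
    calc ∑ k ∈ Finset.range N, m * ‖u k‖
        ≤ ∑ k ∈ Finset.range N, (φ (u k) - φ (u (k + 1))) :=
          Finset.sum_le_sum fun k _ => by simpa [hu_succ] using hcoer _ (hu_mem k)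
      _ = φ x - φ (u N) := by rw [Finset.sum_range_sub' (fun k => φ (u k))]; simp [u]
      _ ≤ φ x := sub_le_self _ (hφ _ (hu_mem N))
  exact tendsto_zero_iff_norm_tendsto_zero.2
    (summable_of_sum_range_le (fun _ => norm_nonneg _) hpartial).tendsto_atTop_zero

end Cone

theorem Module.End.tendsto_pow_apply_zero_of_span_eq_top {R M : Type*} [Semiring R]
    [AddCommMonoid M] [Module R M] [TopologicalSpace M] [ContinuousAdd M] [ContinuousConstSMul R M]
    {s : Set M} (hs : Submodule.span R s = ⊤) {T : Module.End R M}
    (hT : ∀ x ∈ s, Tendsto (fun k => (T ^ k) x) atTop (𝓝 0)) (x : M) :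
    Tendsto (fun k => (T ^ k) x) atTop (𝓝 0) := by
  have hx : x ∈ Submodule.span R s := hs ▸ Submodule.mem_top
  induction hx using Submodule.span_induction with
  | mem y hy => exact hT y hy
  | zero => simpa using tendsto_const_nhds
  | add y z _ _ hy hz => simpa using hy.add hz
  | smul a y _ hy => simpa using hy.const_smul a

theorem Module.End.norm_lt_one_of_hasEigenvalue {𝕜 V : Type*} [NormedField 𝕜]
    [NormedAddCommGroup V] [NormedSpace 𝕜 V] {T : Module.End 𝕜 V}
    (hT : ∀ x, Tendsto (fun k => (T ^ k) x) atTop (𝓝 0)) {c : 𝕜} (hc : T.HasEigenvalue c) :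
    ‖c‖ < 1 := by
  obtain ⟨X, hX⟩ := hc.exists_hasEigenvector
  have hXpos : 0 < ‖X‖ := norm_pos_iff.2 hX.2
  have hnorm : Tendsto (fun k => ‖c‖ ^ k * ‖X‖) atTop (𝓝 0) := by
    simpa [hX.pow_apply, norm_smul] using (hT X).norm
  have hpow := hnorm.div_const ‖X‖
  simp only [mul_div_cancel_right₀ _ hXpos.ne', zero_div] at hpow
  simpa using tendsto_pow_atTop_nhds_zero_iff.1 hpow

namespace Matrix

variable (n : Type*)

def posSemidefCone : PointedCone ℝ (Matrix n n ℂ) where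
  carrier := {A | A.PosSemidef}
  add_mem' := PosSemidef.add
  zero_mem' := PosSemidef.zero
  smul_mem' c _ hA := hA.smul c.2

variable {n} [Fintype n]

open scoped Matrix.Norms.L2Operator MatrixOrder in
theorem isClosed_posSemidefCone : IsClosed (posSemidefCone n : Set (Matrix n n ℂ)) := by
  classical
  show IsClosed {A : Matrix n n ℂ | A.PosSemidef}
  simpa only [Set.Ici, nonneg_iff_posSemidef] using isClosed_Ici (a := (0 : Matrix n n ℂ))

open scoped Matrix.Norms.L2Operator MatrixOrder in
theorem span_posSemidefCone : Submodule.span ℂ (posSemidefCone n : Set (Matrix n n ℂ)) = ⊤ := by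
  classical
  show Submodule.span ℂ {A : Matrix n n ℂ | A.PosSemidef} = ⊤
  simpa only [nonneg_iff_posSemidef] using CStarAlgebra.span_nonneg (A := Matrix n n ℂ)

end Matrix

-- Any norm on the finite-dimensional space of matrices would do; this is the entrywise sup norm.
attribute [local instance] Matrix.normedAddCommGroup Matrix.normedSpace

theorem stmt_16_general {n : Type*} [Fintype n]
    (E : Module.End ℂ (Matrix n n ℂ))
    (hpos : ∀ ρ : Matrix n n ℂ, ρ.PosSemidef → (E ρ).PosSemidef)
    (htr : ∀ ρ : Matrix n n ℂ, ρ.PosSemidef → ρ ≠ 0 → (E ρ).trace.re < ρ.trace.re) :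
    ∀ c ∈ spectrum ℂ E, ‖c‖ < 1 := by
  have hdecay (ρ : Matrix n n ℂ) (hρ : ρ ∈ Matrix.posSemidefCone n) :
      Tendsto (fun k => (E ^ k) ρ) atTop (𝓝 0) := by
    have hreal := PointedCone.tendsto_pow_apply_zero Matrix.isClosed_posSemidefCone
      (T := E.restrictScalars ℝ) (φ := Complex.reLm ∘ₗ Matrix.traceLinearMap n ℝ ℂ)
      hpos (fun ρ hρ => (Complex.le_def.1 (Matrix.PosSemidef.trace_nonneg hρ)).1) htr hρ
    have hpow (k : ℕ) : (E.restrictScalars ℝ ^ k) ρ = (E ^ k) ρ := by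
      simp only [Module.End.pow_apply, LinearMap.coe_restrictScalars]
    simp only [hpow] at hreal
    exact hreal
  have hall := Module.End.tendsto_pow_apply_zero_of_span_eq_top Matrix.span_posSemidefCone hdecay
  intro c hc
  have hc_eig := Module.End.hasEigenvalue_iff_mem_spectrum.2 hc
  exact Module.End.norm_lt_one_of_hasEigenvalue hall hc_eig

/-- A positive, strictly trace-decreasing (on nonzero PSD inputs) map on operators
has spectral radius strictly less than 1: every spectral value has modulus < 1. -/
theorem stmt_16 {n : Type*} [Fintype n] [DecidableEq n]
    (E : Module.End ℂ (Matrix n n ℂ))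
    (hpos : ∀ ρ : Matrix n n ℂ, ρ.PosSemidef → (E ρ).PosSemidef)
    (htr : ∀ ρ : Matrix n n ℂ, ρ.PosSemidef → ρ ≠ 0 → (E ρ).trace.re < ρ.trace.re) :
    ∀ c ∈ spectrum ℂ E, ‖c‖ < 1 :=
  stmt_16_general E hpos htr
end
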